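/- arXiv:2305.06770 — 5 statements merged into one kernel-verified Lean document; each statement's English description precedes it below -/
import Mathlib

section
/- If K is a compact Hausdorff space and A is an open subset of K such that every point-finite family of nonempty open subsets of K meeting A has cardinality at most κ, where κ := c(A, K) is infinite, then c_pf(A, K) = c(A, K). More precisely: for an open subset A of a compact Hausdorff (equivalently, Baire) space K, any point-finite family of nonempty open subsets of K each of which intersects A has cardinality at most the relative cellularity c(A, K), provided c(A, K) is infinite. -/
open Set Cardinal

/-- The relative cellularity of `A` in `X`. -/
noncomputable def relCell (X : Type*) [TopologicalSpace X] (A : Set X) : Cardinal :=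
  ⨆ 𝒰 : {𝒰 : Set (Set X) // (∀ U ∈ 𝒰, IsOpen U ∧ (U ∩ A).Nonempty) ∧
      𝒰.PairwiseDisjoint id}, #↥𝒰.1

/-- The relative point-finite cellularity of `A` in `X`: the supremum of cardinalities of
point-finite families of nonempty open subsets of `X`, each intersecting `A`. -/
noncomputable def relPF (X : Type*) [TopologicalSpace X] (A : Set X) : Cardinal :=
  ⨆ 𝒰 : {𝒰 : Set (Set X) // (∀ U ∈ 𝒰, IsOpen U ∧ (U ∩ A).Nonempty) ∧
      ∀ x : X, {U ∈ 𝒰 | x ∈ U}.Finite}, #↥𝒰.1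

/-!
Let `κ = c(A, K)` and let `𝒰` be a point-finite open family meeting `A`.

If every point of an open `W ⊆ A` lies in at most `n` members of `𝒰`, then at most `κ` members
of `𝒰` meet `W`. By induction on `n`: a maximal disjoint subfamily `𝒟` of the traces `U ∩ W` has
at most `κ` members and every trace meets one of them; the traces meeting `D ∈ 𝒟`, other than
`D` itself, have order at most `n - 1` on `D`. Since `𝒰` is point-finite on `W`, the map
`U ↦ U ∩ W` has finite fibres, which costs only a factor `ℵ₀ ≤ κ`.

The sets where `𝒰` has order at most `n` are closed and cover `K`, so by the Baire category
theorem every `U ∩ A` with `U ∈ 𝒰` contains such a nonempty open `W`. A maximal disjoint family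
of these `W` has at most `κ` members and every member of `𝒰` meets one of them.
-/

universe u

theorem Cardinal.mk_le_of_subset_biUnion {α ι : Type u} {κ : Cardinal} (hκ : ℵ₀ ≤ κ)
    {s : Set α} {I : Set ι} {t : ι → Set α} (hs : s ⊆ ⋃ i ∈ I, t i) (hI : #I ≤ κ)
    (ht : ∀ i ∈ I, #(t i) ≤ κ) : #s ≤ κ :=
  calc #s ≤ #(⋃ i ∈ I, t i) := mk_le_mk_of_subset hs
    _ ≤ #I * ⨆ i : I, #(t i) := mk_biUnion_le t I
    _ ≤ κ * κ := mul_le_mul' hI (ciSup_le' fun i => ht i i.2)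
    _ = κ := mul_eq_self hκ

theorem Cardinal.mk_le_of_finite_fibers {α β : Type u} {κ : Cardinal} (hκ : ℵ₀ ≤ κ)
    {f : α → β} {s : Set α} (hfib : ∀ b ∈ f '' s, (s ∩ f ⁻¹' {b}).Finite)
    (h : #(f '' s) ≤ κ) : #s ≤ κ :=
  mk_le_of_subset_biUnion hκ (t := fun b => s ∩ f ⁻¹' {b})
    (fun _ ha => mem_biUnion (mem_image_of_mem f ha) ⟨ha, rfl⟩) h
    fun b hb => (hfib b hb).lt_aleph0.le.trans hκ

theorem Set.exists_pairwiseDisjoint_subset_forall_inter_nonempty {α : Type*}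
    {𝒲 : Set (Set α)} (hne : ∀ U ∈ 𝒲, U.Nonempty) :
    ∃ 𝒟 ⊆ 𝒲, 𝒟.PairwiseDisjoint id ∧ ∀ U ∈ 𝒲, ∃ D ∈ 𝒟, (U ∩ D).Nonempty := by
  -- Vitali's covering lemma with all radii zero is Zorn's lemma for disjoint subfamilies.
  obtain ⟨𝒟, h𝒟𝒲, hdisj, hmeet⟩ := Vitali.exists_disjoint_subfamily_covering_enlargement id 𝒲 0
    2 one_lt_two (fun _ _ => le_rfl) 0 (fun _ _ => le_rfl) hne
  exact ⟨𝒟, h𝒟𝒲, hdisj, fun U hU => (hmeet U hU).imp fun _ hD => ⟨hD.1, hD.2.1⟩⟩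

theorem Set.encard_sep_mem_image_inter_le {α : Type*} (𝒰 : Set (Set α)) (W : Set α) (x : α) :
    {V ∈ (· ∩ W) '' 𝒰 | x ∈ V}.encard ≤ {U ∈ 𝒰 | x ∈ U}.encard := by
  refine (encard_le_encard ?_).trans (encard_image_le (· ∩ W) _)
  rintro _ ⟨⟨U, hU, rfl⟩, hxU, -⟩
  exact ⟨U, ⟨hU, hxU⟩, rfl⟩

section

variable {X : Type*} [TopologicalSpace X] {A : Set X}

theorem mk_le_relCell_of_pairwiseDisjoint {𝒰 : Set (Set X)}
    (h𝒰 : ∀ U ∈ 𝒰, IsOpen U ∧ (U ∩ A).Nonempty) (hdisj : 𝒰.PairwiseDisjoint id) :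
    #𝒰 ≤ relCell X A :=
  le_ciSup bddAbove_of_small (⟨𝒰, h𝒰, hdisj⟩ : {𝒰 : Set (Set X) //
    (∀ U ∈ 𝒰, IsOpen U ∧ (U ∩ A).Nonempty) ∧ 𝒰.PairwiseDisjoint id})

theorem mk_le_relPF {𝒰 : Set (Set X)} (h𝒰 : ∀ U ∈ 𝒰, IsOpen U ∧ (U ∩ A).Nonempty)
    (hpf : ∀ x, {U ∈ 𝒰 | x ∈ U}.Finite) : #𝒰 ≤ relPF X A :=
  le_ciSup bddAbove_of_small (⟨𝒰, h𝒰, hpf⟩ : {𝒰 : Set (Set X) //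
    (∀ U ∈ 𝒰, IsOpen U ∧ (U ∩ A).Nonempty) ∧ ∀ x, {U ∈ 𝒰 | x ∈ U}.Finite})

theorem relCell_le_relPF (X : Type*) [TopologicalSpace X] (A : Set X) :
    relCell X A ≤ relPF X A :=
  ciSup_le' fun 𝒰 => mk_le_relPF 𝒰.2.1 fun x =>
    Subsingleton.finite fun _ hU _ hV => 𝒰.2.2.elim_set hU.1 hV.1 x hU.2 hV.2

theorem mk_le_relCell_of_forall_exists_subset (hκ : ℵ₀ ≤ relCell X A) {𝒰 𝒱 : Set (Set X)}
    (h𝒱 : ∀ V ∈ 𝒱, IsOpen V ∧ V.Nonempty ∧ V ⊆ A ∧ #{U ∈ 𝒰 | (U ∩ V).Nonempty} ≤ relCell X A)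
    (h𝒰 : ∀ U ∈ 𝒰, ∃ V ∈ 𝒱, V ⊆ U) : #𝒰 ≤ relCell X A := by
  obtain ⟨𝒢, h𝒢𝒱, hdisj, hmeet⟩ :=
    exists_pairwiseDisjoint_subset_forall_inter_nonempty fun V hV => (h𝒱 V hV).2.1
  refine mk_le_of_subset_biUnion hκ (t := fun G => {U ∈ 𝒰 | (U ∩ G).Nonempty}) ?_ ?_
    fun G hG => (h𝒱 G (h𝒢𝒱 hG)).2.2.2
  · intro U hU
    obtain ⟨V, hV, hVU⟩ := h𝒰 U hU
    obtain ⟨G, hG, hVG⟩ := hmeet V hV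
    exact mem_biUnion hG ⟨hU, hVG.mono (inter_subset_inter_left _ hVU)⟩
  · refine mk_le_relCell_of_pairwiseDisjoint (fun G hG => ?_) hdisj
    obtain ⟨hGo, hGne, hGA, -⟩ := h𝒱 G (h𝒢𝒱 hG)
    exact ⟨hGo, by rwa [inter_eq_self_of_subset_left hGA]⟩

theorem mk_sep_inter_nonempty_le_relCell (hκ : ℵ₀ ≤ relCell X A) (n : ℕ) {𝒰 : Set (Set X)}
    (hop : ∀ U ∈ 𝒰, IsOpen U) {W : Set X} (hW : IsOpen W) (hWA : W ⊆ A)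
    (hord : ∀ x ∈ W, {U ∈ 𝒰 | x ∈ U}.encard ≤ n) :
    #{U ∈ 𝒰 | (U ∩ W).Nonempty} ≤ relCell X A := by
  induction n generalizing 𝒰 W with
  | zero =>
    suffices {U ∈ 𝒰 | (U ∩ W).Nonempty} = ∅ by simp [this]
    refine eq_empty_of_forall_notMem ?_
    rintro U ⟨hU, x, hxU, hxW⟩
    have hempty : {U ∈ 𝒰 | x ∈ U} = ∅ := encard_eq_zero.1 (nonpos_iff_eq_zero.1 (hord x hxW))
    exact hempty.subset ⟨hU, hxU⟩
  | succ n ih =>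
    set F := (· ∩ W) '' {U ∈ 𝒰 | (U ∩ W).Nonempty}
    refine mk_le_of_finite_fibers hκ ?_ (?_ : #F ≤ _)
    · rintro _ ⟨U, hU, rfl⟩
      obtain ⟨x, hxU, hxW⟩ := hU.2
      refine (finite_of_encard_le_coe (hord x hxW)).subset ?_
      rintro U' ⟨hU', hU'W : U' ∩ W = U ∩ W⟩
      exact ⟨hU'.1, (hU'W ▸ ⟨hxU, hxW⟩ : x ∈ U' ∩ W).1⟩
    have hF : ∀ V ∈ F, IsOpen V ∧ V.Nonempty ∧ V ⊆ A := by
      rintro _ ⟨U, hU, rfl⟩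
      exact ⟨(hop U hU.1).inter hW, hU.2, inter_subset_right.trans hWA⟩
    have hordF : ∀ x ∈ W, {V ∈ F | x ∈ V}.encard ≤ n + 1 := fun x hx =>
      (encard_sep_mem_image_inter_le _ W x).trans
        ((encard_le_encard (t := {U ∈ 𝒰 | x ∈ U}) fun U hU => ⟨hU.1.1, hU.2⟩).trans (hord x hx))
    refine mk_le_relCell_of_forall_exists_subset hκ (𝒱 := F) (fun V hV => ?_)
      fun V hV => ⟨V, hV, subset_rfl⟩
    obtain ⟨hVo, hVne, hVA⟩ := hF V hV
    refine ⟨hVo, hVne, hVA, ?_⟩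
    have hVW : V ⊆ W := by
      obtain ⟨U, -, rfl⟩ := hV
      exact inter_subset_right
    -- `V` itself accounts for one of the at most `n + 1` traces through each point of `V`.
    have hord' : ∀ x ∈ V, {V' ∈ F \ {V} | x ∈ V'}.encard ≤ n := by
      intro x hx
      have hsep : {V' ∈ F \ {V} | x ∈ V'} = {V' ∈ F | x ∈ V'} \ {V} := by
        ext V'
        simp only [mem_ofPred_eq, mem_sdiff, mem_singleton_iff]
        tauto
      rw [← ENat.add_le_add_iff_right ENat.one_ne_top, hsep,
        encard_sdiff_singleton_add_one (show V ∈ {V' ∈ F | x ∈ V'} from ⟨hV, hx⟩)]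
      exact hordF x (hVW hx)
    have hrest := ih (fun V' hV' => (hF V' hV'.1).1) hVo hVA hord'
    calc #{V' ∈ F | (V' ∩ V).Nonempty}
        ≤ #(insert V {V' ∈ F \ {V} | (V' ∩ V).Nonempty} : Set (Set X)) := by
          refine mk_le_mk_of_subset fun V' hV' => ?_
          by_cases h : V' = V
          · exact Or.inl h
          · exact Or.inr ⟨⟨hV'.1, h⟩, hV'.2⟩
      _ ≤ #{V' ∈ F \ {V} | (V' ∩ V).Nonempty} + 1 := mk_insert_le
      _ ≤ relCell X A := add_le_of_le hκ hrest (one_le_aleph0.trans hκ)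

theorem isOpen_setOf_lt_encard_sep_mem {𝒰 : Set (Set X)} (hop : ∀ U ∈ 𝒰, IsOpen U)
    (hpf : ∀ x, {U ∈ 𝒰 | x ∈ U}.Finite) (n : ℕ∞) :
    IsOpen {x | n < {U ∈ 𝒰 | x ∈ U}.encard} := by
  refine isOpen_iff_mem_nhds.2 fun x hx => ?_
  filter_upwards [(hpf x).eventually_all.2 fun U hU => (hop U hU.1).mem_nhds hU.2] with y hy
  exact hx.trans_le (encard_le_encard fun U hU => ⟨hU.1, hy U hU⟩)

theorem exists_isOpen_subset_forall_encard_sep_mem_le [BaireSpace X] {𝒰 : Set (Set X)}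
    (hop : ∀ U ∈ 𝒰, IsOpen U) (hpf : ∀ x, {U ∈ 𝒰 | x ∈ U}.Finite) {O : Set X} (hO : IsOpen O)
    (hne : O.Nonempty) :
    ∃ (n : ℕ) (W : Set X), IsOpen W ∧ W.Nonempty ∧ W ⊆ O ∧
      ∀ x ∈ W, {U ∈ 𝒰 | x ∈ U}.encard ≤ n := by
  set C : ℕ → Set X := fun n => {x | {U ∈ 𝒰 | x ∈ U}.encard ≤ n}
  have hC : ∀ n, IsClosed (C n) := fun n => by
    simpa only [C, ← isOpen_compl_iff, compl_ofPred, not_le] using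
      isOpen_setOf_lt_encard_sep_mem hop hpf n
  have hcover : ⋃ n, C n = Set.univ := eq_univ_of_forall fun x => mem_iUnion.2 <|
    (ENat.ne_top_iff_exists.1 (hpf x).encard_lt_top.ne).imp fun _ hn => hn.ge
  obtain ⟨x, hxO, hx⟩ := (dense_iUnion_interior_of_closed hC hcover).inter_open_nonempty O hO hne
  obtain ⟨n, hxn⟩ := mem_iUnion.1 hx
  exact ⟨n, O ∩ interior (C n), hO.inter isOpen_interior, ⟨x, hxO, hxn⟩, inter_subset_left,
    fun y hy => (interior_subset hy.2 : y ∈ C n)⟩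

theorem mk_le_relCell_of_pointFinite [BaireSpace X] (hA : IsOpen A) (hκ : ℵ₀ ≤ relCell X A)
    {𝒰 : Set (Set X)} (h𝒰 : ∀ U ∈ 𝒰, IsOpen U ∧ (U ∩ A).Nonempty)
    (hpf : ∀ x, {U ∈ 𝒰 | x ∈ U}.Finite) : #𝒰 ≤ relCell X A := by
  have hop : ∀ U ∈ 𝒰, IsOpen U := fun U hU => (h𝒰 U hU).1
  refine mk_le_relCell_of_forall_exists_subset hκ
    (𝒱 := {V | IsOpen V ∧ V.Nonempty ∧ V ⊆ A ∧ #{U ∈ 𝒰 | (U ∩ V).Nonempty} ≤ relCell X A})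
    (fun V hV => hV) fun U hU => ?_
  obtain ⟨n, W, hW, hWne, hWUA, hord⟩ :=
    exists_isOpen_subset_forall_encard_sep_mem_le hop hpf ((hop U hU).inter hA) (h𝒰 U hU).2
  have hWA : W ⊆ A := hWUA.trans inter_subset_right
  exact ⟨W, ⟨hW, hWne, hWA, mk_sep_inter_nonempty_le_relCell hκ n hop hW hWA hord⟩,
    hWUA.trans inter_subset_left⟩

end

/-- For an open subset `A` of a compact Hausdorff space `K` with `c(A, K)` infinite,
`c_pf(A, K) = c(A, K)`; more precisely, every point-finite family of nonempty open subsets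
of `K` each intersecting `A` has cardinality at most `c(A, K)`. -/
theorem relPF_eq_relCell_of_isOpen (K : Type*) [TopologicalSpace K] [CompactSpace K]
    [T2Space K] (A : Set K) (hA : IsOpen A) (hinf : ℵ₀ ≤ relCell K A) :
    relPF K A = relCell K A ∧
      ∀ 𝒰 : Set (Set K), (∀ U ∈ 𝒰, IsOpen U ∧ (U ∩ A).Nonempty) →
        (∀ x : K, {U ∈ 𝒰 | x ∈ U}.Finite) → #↥𝒰 ≤ relCell K A := by
  refine ⟨le_antisymm ?_ (relCell_le_relPF K A), fun _ => mk_le_relCell_of_pointFinite hA hinf⟩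
  exact ciSup_le' fun 𝒰 => mk_le_relCell_of_pointFinite hA hinf 𝒰.2.1 𝒰.2.2
end

section
/- In a compact Hausdorff space K satisfying the countable chain condition, every point-finite family of nonempty open subsets of K is countable. -/
/-!
The order `x ↦ #{U ∈ 𝒰 | x ∈ U}` of a family of open sets is lower semicontinuous, so the sets
where it is at most `n` are closed; for a point-finite family they cover `K`, and by the Baire
category theorem their interiors have dense union, which every `U ∈ 𝒰` meets. On an open set `W`
where the order is at most `n`, a maximal disjoint family of traces `A ∩ W` is countable by ccc
and meets every member meeting `W`; discarding one of its members `B` lowers the order on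
`B ∩ W` to `n - 1`, so induction on `n` shows that only countably many members meet `W`.
-/

open Set Topology

def CountableChainCondition (X : Type*) [TopologicalSpace X] : Prop :=
  ∀ 𝒱 : Set (Set X), (∀ V ∈ 𝒱, IsOpen V ∧ V.Nonempty) → 𝒱.PairwiseDisjoint id → 𝒱.Countable

/-- The number of members of `𝒰` containing `x`, which is `⊤` when there are infinitely many. -/
noncomputable def pointOrder {X : Type*} (𝒰 : Set (Set X)) (x : X) : ℕ∞ :=
  {U ∈ 𝒰 | x ∈ U}.encard

theorem pointOrder_diff_singleton_add_one {X : Type*} {𝒜 : Set (Set X)} {A : Set X} {x : X}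
    (hA : A ∈ 𝒜) (hx : x ∈ A) : pointOrder (𝒜 \ {A}) x + 1 = pointOrder 𝒜 x := by
  rw [pointOrder, pointOrder, ← encard_insert_of_notMem (a := A) (by simp)]
  congr 1
  ext B
  by_cases h : B = A <;> simp [h, hA, hx]

section

variable {X ι : Type*} [TopologicalSpace X]

namespace CountableChainCondition

theorem countable_of_pairwiseDisjoint (hccc : CountableChainCondition X) {s : Set ι}
    {f : ι → Set X} (hd : s.PairwiseDisjoint f) (ho : ∀ i ∈ s, IsOpen (f i))
    (hne : ∀ i ∈ s, (f i).Nonempty) : s.Countable := by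
  have hinj : s.InjOn f := fun i hi j hj hij => by
    obtain ⟨x, hx⟩ := hne i hi
    exact hd.elim_set hi hj x hx (hij ▸ hx)
  refine countable_of_injective_of_countable_image hinj (hccc (f '' s) ?_ ?_)
  · rintro _ ⟨i, hi, rfl⟩
    exact ⟨ho i hi, hne i hi⟩
  · exact hinj.pairwiseDisjoint_image.2 hd

theorem exists_countable_subset_forall_inter_nonempty (hccc : CountableChainCondition X)
    {s : Set ι} {f : ι → Set X} (ho : ∀ i ∈ s, IsOpen (f i)) (hne : ∀ i ∈ s, (f i).Nonempty) :
    ∃ t ⊆ s, t.Countable ∧ ∀ i ∈ s, ∃ j ∈ t, (f i ∩ f j).Nonempty := by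
  obtain ⟨t, ht⟩ : ∃ t, Maximal (fun t => t ⊆ s ∧ t.PairwiseDisjoint f) t :=
    zorn_subset _ fun c hc hchain =>
      ⟨⋃₀ c, ⟨sUnion_subset fun u hu => (hc hu).1,
        (pairwiseDisjoint_sUnion hchain.directedOn).2 fun u hu => (hc hu).2⟩,
        fun _ => subset_sUnion_of_mem⟩
  refine ⟨t, ht.prop.1, hccc.countable_of_pairwiseDisjoint ht.prop.2
    (fun i hi => ho i (ht.prop.1 hi)) (fun i hi => hne i (ht.prop.1 hi)), fun i hi => ?_⟩
  by_contra! hdisj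
  have hit : i ∈ t := ht.mem_of_prop_insert ⟨insert_subset hi ht.prop.1,
    ht.prop.2.insert fun j hj _ => disjoint_iff_inter_eq_empty.2 (hdisj j hj)⟩
  exact (hne i hi).ne_empty (inter_self (f i) ▸ hdisj i hit)

end CountableChainCondition

theorem lowerSemicontinuous_pointOrder {𝒰 : Set (Set X)} (hopen : ∀ U ∈ 𝒰, IsOpen U) :
    LowerSemicontinuous (pointOrder 𝒰) := by
  intro x m hm
  obtain ⟨𝒯, h𝒯, h𝒯card⟩ := exists_subset_encard_eq (Order.add_one_le_of_lt hm)
  have hm_ne_top : m ≠ ⊤ := hm.ne_top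
  have h𝒯fin : 𝒯.Finite :=
    encard_ne_top_iff.1 (h𝒯card ▸ WithTop.add_ne_top.2 ⟨hm_ne_top, ENat.one_ne_top⟩)
  have hnhds : ⋂₀ 𝒯 ∈ 𝓝 x :=
    (h𝒯fin.isOpen_sInter fun U hU => hopen U (h𝒯 hU).1).mem_nhds fun U hU => (h𝒯 hU).2
  filter_upwards [hnhds] with y hy
  calc m < m + 1 := (ENat.lt_add_one_iff hm_ne_top).2 le_rfl
    _ = 𝒯.encard := h𝒯card.symm
    _ ≤ pointOrder 𝒰 y := encard_le_encard fun U hU => ⟨(h𝒯 hU).1, hy U hU⟩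

theorem countable_setOf_inter_nonempty_of_pointOrder_le (hccc : CountableChainCondition X)
    (n : ℕ) {𝒜 : Set (Set X)} {W : Set X} (hopen : ∀ A ∈ 𝒜, IsOpen A) (hW : IsOpen W)
    (hord : ∀ x ∈ W, pointOrder 𝒜 x ≤ n) : {A ∈ 𝒜 | (A ∩ W).Nonempty}.Countable := by
  induction n generalizing 𝒜 W with
  | zero =>
    refine countable_empty.mono ?_
    rintro A ⟨hA, x, hxA, hxW⟩
    exact (encard_eq_zero.1 (nonpos_iff_eq_zero.1 (hord x hxW))).subset ⟨hA, hxA⟩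
  | succ n ih =>
    obtain ⟨𝒯, h𝒯, h𝒯c, hmeet⟩ := hccc.exists_countable_subset_forall_inter_nonempty
      (s := {A ∈ 𝒜 | (A ∩ W).Nonempty}) (f := (· ∩ W))
      (fun A hA => (hopen A hA.1).inter hW) fun A hA => hA.2
    have hcover : {A ∈ 𝒜 | (A ∩ W).Nonempty} ⊆
        ⋃ B ∈ 𝒯, insert B {A ∈ 𝒜 \ {B} | (A ∩ (B ∩ W)).Nonempty} := by
      intro A hA
      obtain ⟨B, hB, x, ⟨hxA, hxW⟩, hxB, -⟩ := hmeet A hA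
      refine mem_biUnion hB ?_
      by_cases h : A = B
      · exact h ▸ mem_insert A _
      · exact mem_insert_of_mem _ ⟨⟨hA.1, h⟩, x, hxA, hxB, hxW⟩
    refine (h𝒯c.biUnion fun B hB => (ih (fun A hA => hopen A hA.1)
      ((hopen B (h𝒯 hB).1).inter hW) fun x hx => ?_).insert B).mono hcover
    have h := pointOrder_diff_singleton_add_one (h𝒯 hB).1 hx.1 ▸ hord x hx.2
    push_cast at h
    exact (WithTop.add_le_add_iff_right ENat.one_ne_top).1 h

end

/-- In a compact Hausdorff space satisfying the countable chain condition, every point-finite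
family of nonempty open subsets is countable. -/
theorem countable_of_pointFinite_of_ccc (K : Type*) [TopologicalSpace K] [CompactSpace K]
    [T2Space K]
    (hccc : ∀ 𝒱 : Set (Set K), (∀ V ∈ 𝒱, IsOpen V ∧ V.Nonempty) →
      𝒱.PairwiseDisjoint id → 𝒱.Countable)
    (𝒰 : Set (Set K)) (hopen : ∀ U ∈ 𝒰, IsOpen U ∧ U.Nonempty)
    (hpf : ∀ x : K, {U ∈ 𝒰 | x ∈ U}.Finite) : 𝒰.Countable := by
  have hopen' : ∀ U ∈ 𝒰, IsOpen U := fun U hU => (hopen U hU).1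
  have hcover : ⋃ n : ℕ, {x | pointOrder 𝒰 x ≤ n} = univ :=
    eq_univ_of_forall fun x => mem_iUnion.2 ⟨_, (hpf x).cast_ncard_eq.ge⟩
  have hdense : Dense (⋃ n : ℕ, interior {x | pointOrder 𝒰 x ≤ n}) :=
    dense_iUnion_interior_of_closed
      (fun n => (lowerSemicontinuous_pointOrder hopen').isClosed_preimage n) hcover
  have hsub : 𝒰 ⊆ ⋃ n : ℕ, {U ∈ 𝒰 | (U ∩ interior {x | pointOrder 𝒰 x ≤ n}).Nonempty} := by
    intro U hU
    obtain ⟨x, hxU, hx⟩ := hdense.inter_open_nonempty U (hopen U hU).1 (hopen U hU).2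
    obtain ⟨n, hxn⟩ := mem_iUnion.1 hx
    exact mem_iUnion.2 ⟨n, hU, x, hxU, hxn⟩
  refine (countable_iUnion fun n => ?_).mono hsub
  exact countable_setOf_inter_nonempty_of_pointOrder_le hccc n hopen' isOpen_interior
    fun _ hx => interior_subset (s := {x | pointOrder 𝒰 x ≤ n}) hx
end

section
/- If K is a compact Hausdorff space admitting a point-finite family (U_x)_{x ∈ K} of open sets with x ∈ U_x for every x, then for every infinite subset A of K the relative point-finite cellularity c_pf(A, K) equals the cardinality of A. -/
open Set Cardinal

private lemma mk_le_mul_aleph0_of_fibers_finite {α β : Type u} (f : α → β)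
    (h : ∀ b, (f ⁻¹' {b}).Finite) : #α ≤ #β * ℵ₀ := by
  calc #α = Cardinal.sum (fun b => #(f ⁻¹' {b})) := by
        rw [← Cardinal.mk_sigma]
        exact Cardinal.mk_congr (Equiv.sigmaFiberEquiv f).symm
    _ ≤ Cardinal.sum (fun _ : β => ℵ₀) := Cardinal.sum_le_sum _ _ fun b => by
        have := (h b).to_subtype
        exact (Cardinal.lt_aleph0_of_finite _).le
    _ = #β * ℵ₀ := Cardinal.sum_const' _ _

private lemma infinite_of_fibers_finite {α β : Type*} (f : α → β)
    (h : ∀ b, (f ⁻¹' {b}).Finite) [Infinite α] : Infinite β := by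
  by_contra hfin
  rw [not_infinite_iff_finite] at hfin
  haveI h1 : ∀ b, Finite {x // f x = b} := fun b => (h b).to_subtype
  haveI h2 : Finite (Σ b, {x // f x = b}) := inferInstance
  have h3 : Finite α := Finite.of_equiv _ (Equiv.sigmaFiberEquiv f)
  exact Infinite.not_finite h3

/-- If a compact Hausdorff space `K` admits a point-finite family `(U x)_{x ∈ K}` of open
sets with `x ∈ U x` for every `x`, then for every infinite subset `A` of `K`,
`c_pf(A, K) = |A|`. -/
theorem relPF_eq_card (K : Type*) [TopologicalSpace K] [CompactSpace K] [T2Space K]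
    (U : K → Set K) (hopen : ∀ x, IsOpen (U x)) (hmem : ∀ x, x ∈ U x)
    (hpf : ∀ y : K, {x : K | y ∈ U x}.Finite)
    (A : Set K) (hA : A.Infinite) : relPF K A = #↥A := by
  have hAinf : Infinite ↥A := hA.to_subtype
  have hℵA : ℵ₀ ≤ #↥A := Cardinal.infinite_iff.mp hAinf
  -- upper bound for each admissible family
  have upper : ∀ 𝒰 : {𝒰 : Set (Set K) // (∀ V ∈ 𝒰, IsOpen V ∧ (V ∩ A).Nonempty) ∧
      ∀ x : K, {V ∈ 𝒰 | x ∈ V}.Finite}, #↥𝒰.1 ≤ #↥A := by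
    rintro ⟨𝒰, h1, h2⟩
    have hne : ∀ V : ↥𝒰, (V.1 ∩ A).Nonempty := fun V => (h1 V.1 V.2).2
    set f : ↥𝒰 → ↥A := fun V => ⟨(hne V).choose, (hne V).choose_spec.2⟩ with hf
    have hfib : ∀ a : ↥A, (f ⁻¹' {a}).Finite := by
      intro a
      have hsub : f ⁻¹' {a} ⊆ Subtype.val ⁻¹' {V ∈ 𝒰 | (a : K) ∈ V} := by
        intro V hV
        have hVa : f V = a := hV
        have : (f V : K) ∈ V.1 := (hne V).choose_spec.1
        rw [hVa] at this
        exact ⟨V.2, this⟩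
      exact Set.Finite.subset ((h2 a).preimage (Subtype.val_injective.injOn)) hsub
    calc #↥𝒰 ≤ #↥A * ℵ₀ := mk_le_mul_aleph0_of_fibers_finite f hfib
      _ = #↥A := Cardinal.mul_aleph0_eq hℵA
  refine le_antisymm ?_ ?_
  · have : Nonempty {𝒰 : Set (Set K) // (∀ V ∈ 𝒰, IsOpen V ∧ (V ∩ A).Nonempty) ∧
        ∀ x : K, {V ∈ 𝒰 | x ∈ V}.Finite} := ⟨⟨∅, by simp, by simp⟩⟩
    exact ciSup_le' upper
  · -- the witness family `U '' A`
    set 𝒰₀ : Set (Set K) := U '' A with h𝒰₀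
    have prop1 : ∀ V ∈ 𝒰₀, IsOpen V ∧ (V ∩ A).Nonempty := by
      rintro V ⟨a, ha, rfl⟩
      exact ⟨hopen a, ⟨a, hmem a, ha⟩⟩
    have prop2 : ∀ x : K, {V ∈ 𝒰₀ | x ∈ V}.Finite := by
      intro x
      have : {V ∈ 𝒰₀ | x ∈ V} ⊆ U '' {y | x ∈ U y} := by
        rintro V ⟨⟨a, _, rfl⟩, hx⟩
        exact ⟨a, hx, rfl⟩
      exact Set.Finite.subset ((hpf x).image U) this
    -- map A into 𝒰₀ with finite fibers
    set g : ↥A → ↥𝒰₀ := fun a => ⟨U a, ⟨a, a.2, rfl⟩⟩ with hg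
    have hgfib : ∀ V : ↥𝒰₀, (g ⁻¹' {V}).Finite := by
      intro V
      obtain ⟨a₀, _, ha₀⟩ := V.2
      have ha₀V : a₀ ∈ V.1 := ha₀ ▸ hmem a₀
      have hsub : g ⁻¹' {V} ⊆ Subtype.val ⁻¹' {y | a₀ ∈ U y} := by
        intro a ha
        have : g a = V := ha
        have : U a = V.1 := congrArg Subtype.val this
        exact Set.mem_preimage.mpr (by simpa [this] using ha₀V)
      exact Set.Finite.subset ((hpf a₀).preimage (Subtype.val_injective.injOn)) hsub
    have h𝒰₀inf : Infinite ↥𝒰₀ := infinite_of_fibers_finite g hgfib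
    have hle : #↥A ≤ #↥𝒰₀ := by
      calc #↥A ≤ #↥𝒰₀ * ℵ₀ := mk_le_mul_aleph0_of_fibers_finite g hgfib
        _ = #↥𝒰₀ := Cardinal.mul_aleph0_eq (Cardinal.infinite_iff.mp h𝒰₀inf)
    have hbdd : BddAbove (Set.range fun 𝒰 : {𝒰 : Set (Set K) //
        (∀ V ∈ 𝒰, IsOpen V ∧ (V ∩ A).Nonempty) ∧
        ∀ x : K, {V ∈ 𝒰 | x ∈ V}.Finite} => #↥𝒰.1) := by
      refine ⟨#↥A, ?_⟩
      rintro _ ⟨𝒰, rfl⟩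
      exact upper 𝒰
    exact le_ciSup_of_le hbdd ⟨𝒰₀, prop1, prop2⟩ hle
end

section
/- If K is a compact Hausdorff space admitting a σ-point-bounded family (U_x)_{x ∈ K} of distinct open sets with x ∈ U_x for all x, then for every infinite subset A of K, c_pb(A, K) = |A|, where c_pb(A, K) is the supremum of cardinalities of point-bounded families of nonempty open subsets of K each intersecting A. -/
open Set Cardinal

/-- The relative point-bounded cellularity of `A` in `X`: the supremum of cardinalities of
point-bounded families of nonempty open subsets of `X`, each intersecting `A`. -/
noncomputable def relPB (X : Type*) [TopologicalSpace X] (A : Set X) : Cardinal :=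
  ⨆ 𝒰 : {𝒰 : Set (Set X) // (∀ U ∈ 𝒰, IsOpen U ∧ (U ∩ A).Nonempty) ∧
      ∃ k : ℕ, ∀ x : X, #↥{U ∈ 𝒰 | x ∈ U} ≤ (k : Cardinal)}, #↥𝒰.1

/-- If a compact Hausdorff space `K` admits a σ-point-bounded family `(U x)_{x ∈ K}` of
distinct open sets with `x ∈ U x` for every `x`, then for every infinite subset `A` of `K`,
`c_pb(A, K) = |A|`. -/
theorem relPB_eq_card (K : Type*) [TopologicalSpace K] [CompactSpace K] [T2Space K]
    (U : K → Set K) (hopen : ∀ x, IsOpen (U x)) (hmem : ∀ x, x ∈ U x)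
    (hinj : Function.Injective U)
    (hσpb : ∃ c : K → ℕ, ∀ n : ℕ, ∃ k : ℕ, ∀ y : K,
      #↥{x : K | c x = n ∧ y ∈ U x} ≤ (k : Cardinal))
    (A : Set K) (hA : A.Infinite) : relPB K A = #↥A := by
  haveI := hA.to_subtype
  obtain ⟨c, hc⟩ := hσpb
  choose k hk using hc
  -- color classes
  set B : ℕ → Set K := fun n => {a ∈ A | c a ≤ n} with hB
  -- each B n gives a point-bounded family
  have hBfam : ∀ n : ℕ, (∀ V ∈ U '' B n, IsOpen V ∧ (V ∩ A).Nonempty) ∧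
      ∃ m : ℕ, ∀ y : K, #↥{V ∈ U '' B n | y ∈ V} ≤ (m : Cardinal) := by
    intro n
    constructor
    · rintro V ⟨x, hx, rfl⟩
      exact ⟨hopen x, ⟨x, hmem x, hx.1⟩⟩
    · refine ⟨(n + 1) * (Finset.range (n + 1)).sup k, fun y => ?_⟩
      have himg : {V ∈ U '' B n | y ∈ V} = U '' {x ∈ B n | y ∈ U x} := by
        ext V
        constructor
        · rintro ⟨⟨x, hx, rfl⟩, hy⟩
          exact ⟨x, ⟨hx, hy⟩, rfl⟩
        · rintro ⟨x, ⟨hx, hy⟩, rfl⟩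
          exact ⟨⟨x, hx, rfl⟩, hy⟩
      rw [himg, Cardinal.mk_image_eq hinj]
      -- inject into Σ i : Fin (n+1), {x | c x = i ∧ y ∈ U x}
      have hfib : #↥{x ∈ B n | y ∈ U x} ≤
          Cardinal.sum (fun i : Fin (n + 1) => #↥{x : K | c x = i ∧ y ∈ U x}) := by
        rw [← Cardinal.mk_sigma]
        refine Cardinal.mk_le_of_injective (f := fun x =>
          ⟨⟨c x.1, Nat.lt_succ_of_le x.2.1.2⟩, ⟨x.1, rfl, x.2.2⟩⟩) ?_
        rintro ⟨x, hx⟩ ⟨x', hx'⟩ h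
        have h2 := congrArg (fun p : (Σ i : Fin (n + 1), {x : K | c x = ↑i ∧ y ∈ U x}) =>
          (p.2 : K)) h
        exact Subtype.ext h2
      refine hfib.trans ?_
      have : Cardinal.sum (fun i : Fin (n + 1) => #↥{x : K | c x = i ∧ y ∈ U x}) ≤
          Cardinal.sum (fun _ : Fin (n + 1) => (((Finset.range (n + 1)).sup k : ℕ) : Cardinal)) := by
        refine Cardinal.sum_le_sum _ _ fun i => ?_
        refine (hk i y).trans ?_
        exact_mod_cast Nat.cast_le.mpr (Finset.le_sup (Finset.mem_range.mpr i.isLt))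
      refine this.trans ?_
      rw [Cardinal.sum_const]
      simp only [Cardinal.mk_fintype, Fintype.card_fin, Cardinal.lift_natCast]
      rw [← Nat.cast_mul]
  -- relPB ≥ #(B n)
  have hBle : ∀ n : ℕ, #↥(B n) ≤ relPB K A := by
    intro n
    have := le_ciSup (f := fun 𝒰 : {𝒰 : Set (Set K) // (∀ V ∈ 𝒰, IsOpen V ∧ (V ∩ A).Nonempty) ∧
        ∃ m : ℕ, ∀ x : K, #↥{V ∈ 𝒰 | x ∈ V} ≤ (m : Cardinal)} => #↥𝒰.1)
      (Cardinal.bddAbove_range _) ⟨U '' B n, hBfam n⟩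
    rw [← Cardinal.mk_image_eq (f := U) hinj]
    exact this
  have haleph : ℵ₀ ≤ relPB K A := by
    rw [Cardinal.aleph0_le]
    intro m
    obtain ⟨s, hsA, hscard⟩ := hA.exists_subset_card_eq m
    refine le_trans ?_ (hBle (s.sup c))
    have hsub : ↑s ⊆ B (s.sup c) := fun a ha => ⟨hsA ha, Finset.le_sup ha⟩
    calc (m : Cardinal) = #↥(↑s : Set K) := by simp [Cardinal.mk_coe_finset, hscard]
      _ ≤ #↥(B (s.sup c)) := Cardinal.mk_le_mk_of_subset hsub
  apply le_antisymm
  · -- relPB ≤ #A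
    haveI : Nonempty {𝒰 : Set (Set K) // (∀ V ∈ 𝒰, IsOpen V ∧ (V ∩ A).Nonempty) ∧
        ∃ m : ℕ, ∀ x : K, #↥{V ∈ 𝒰 | x ∈ V} ≤ (m : Cardinal)} := by
      refine ⟨⟨∅, fun V hV => absurd hV (notMem_empty V), 0, fun x => ?_⟩⟩
      simp
    refine ciSup_le' ?_
    rintro ⟨𝒰, h1, m, hm⟩
    -- choose a point of V ∩ A for each V ∈ 𝒰
    have hpt : ∀ V : ↥𝒰, ∃ a : ↥A, (a : K) ∈ V.1 := by
      rintro ⟨V, hV⟩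
      obtain ⟨a, haV, haA⟩ := (h1 V hV).2
      exact ⟨⟨a, haA⟩, haV⟩
    choose f hf using hpt
    have key : #↥𝒰 ≤ #↥A * (m : Cardinal) := by
      have := Cardinal.mk_congr (Equiv.sigmaFiberEquiv f).symm
      rw [this, Cardinal.mk_sigma]
      refine le_trans (Cardinal.sum_le_sum _ (fun _ => (m : Cardinal)) fun a => ?_) ?_
      · -- fiber over a injects into {V ∈ 𝒰 | ↑a ∈ V}
        refine le_trans ?_ (hm (a : K))
        refine Cardinal.mk_le_of_injective (f := fun V =>
          ⟨V.1.1, V.1.2, ?_⟩) ?_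
        · have : f V.1 = a := V.2
          simpa [this] using hf V.1
        · rintro ⟨⟨V, hV⟩, hVa⟩ ⟨⟨V', hV'⟩, hV'a⟩ h
          simp only [Subtype.mk.injEq] at h
          exact Subtype.ext (Subtype.ext h)
      · rw [Cardinal.sum_const']
    refine key.trans ?_
    calc #↥A * (m : Cardinal) ≤ #↥A * ℵ₀ :=
          mul_le_mul_right (Cardinal.nat_lt_aleph0 m).le _
      _ = #↥A := Cardinal.mul_aleph0_eq (Cardinal.aleph0_le_mk ↥A)
  · -- #A ≤ relPB
    have hcover : A ⊆ ⋃ n : ULift.{u_1} ℕ, B n.down := fun a ha =>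
      mem_iUnion.mpr ⟨ULift.up (c a), ha, le_refl _⟩
    calc #↥A ≤ #↥(⋃ n : ULift.{u_1} ℕ, B n.down) := Cardinal.mk_le_mk_of_subset hcover
      _ ≤ Cardinal.sum (fun n : ULift.{u_1} ℕ => #↥(B n.down)) := Cardinal.mk_iUnion_le_sum_mk
      _ ≤ Cardinal.sum (fun _ : ULift.{u_1} ℕ => relPB K A) :=
          Cardinal.sum_le_sum _ _ (fun n => hBle n.down)
      _ = ℵ₀ * relPB K A := by rw [Cardinal.sum_const']; simp
      _ = relPB K A := Cardinal.aleph0_mul_eq haleph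
end

section
/- Let K₁, K₂ be compact Hausdorff spaces, E a Banach space of nontrivial cotype q with cotype constant yielding: for every δ > 0 and vectors e₁,…,e_m ∈ E with ‖e_i‖ ≥ δ there exist signs α₁,…,α_m ∈ {±1} with ‖∑ α_i e_i‖ ≥ δ C m^{1/q}. Let T : C(K₁) → C(K₂, E) be an isomorphic embedding, and let 𝒫 be a family of continuous functions f : K₁ → [0,1] whose supports form a family of order at most k. Then for every ε with 0 < ε < 1/‖T⁻¹‖, the family { {y ∈ K₂ : ‖(Tf)(y)‖ > ε} : f ∈ 𝒫 } has order at most ⌈(k‖T‖/(εC))^q⌉, i.e., it is point-bounded. -/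
open Set Cardinal

/-- Let `E` have the sign-combination cotype property with constants `C, q`, let
`T : C(K₁) → C(K₂, E)` be an isomorphic embedding (`‖f‖ ≤ M ‖T f‖`), and let `P` be a family
of `[0,1]`-valued continuous functions whose supports form a family of order at most `k`.
Then for every `0 < ε < 1/M`, the family `{ {y : ‖(Tf)(y)‖ > ε} : f ∈ P }` has order at most
`⌈(k‖T‖/(εC))^q⌉`. -/
theorem pointBounded_of_cotype (K₁ K₂ : Type*) [TopologicalSpace K₁] [CompactSpace K₁]
    [T2Space K₁] [TopologicalSpace K₂] [CompactSpace K₂] [T2Space K₂]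
    (E : Type*) [NormedAddCommGroup E] [NormedSpace ℝ E] [CompleteSpace E]
    (C q : ℝ) (hC : 0 < C) (hq : 2 ≤ q)
    (hcot : ∀ δ : ℝ, 0 < δ → ∀ (m : ℕ) (e : Fin m → E), (∀ i, δ ≤ ‖e i‖) →
      ∃ α : Fin m → ℝ, (∀ i, α i = 1 ∨ α i = -1) ∧
        δ * C * (m : ℝ) ^ (1 / q) ≤ ‖∑ i, α i • e i‖)
    (T : C(K₁, ℝ) →L[ℝ] C(K₂, E)) (M : ℝ) (hM : 0 < M)
    (hT : ∀ f : C(K₁, ℝ), ‖f‖ ≤ M * ‖T f‖)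
    (P : Set C(K₁, ℝ)) (hrange : ∀ f ∈ P, ∀ x : K₁, f x ∈ Set.Icc (0 : ℝ) 1)
    (k : ℕ) (horder : ∀ x : K₁, #↥{f ∈ P | x ∈ tsupport ⇑f} ≤ (k : Cardinal))
    (ε : ℝ) (hε : 0 < ε) (hεM : ε < 1 / M) :
    ∀ y : K₂, #↥{f ∈ P | ε < ‖(T f) y‖} ≤ (⌈((k : ℝ) * ‖T‖ / (ε * C)) ^ q⌉₊ : Cardinal) := by
  classical
  intro y
  set N := ⌈((k : ℝ) * ‖T‖ / (ε * C)) ^ q⌉₊ with hN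
  by_contra hcon
  rw [not_le] at hcon
  have hsucc : ((N + 1 : ℕ) : Cardinal) ≤ #↥{f ∈ P | ε < ‖(T f) y‖} := by
    rw [Cardinal.nat_succ]
    exact Order.succ_le_of_lt hcon
  have hemb : Nonempty (Fin (N + 1) ↪ ↥{f ∈ P | ε < ‖(T f) y‖}) := by
    rw [← Cardinal.lift_mk_le', Cardinal.mk_fin, Cardinal.lift_natCast, Cardinal.lift_uzero]
    exact hsucc
  obtain ⟨f⟩ := hemb
  set m := N + 1 with hm
  -- the vectors
  have hmem : ∀ i : Fin m, (f i : C(K₁, ℝ)) ∈ P ∧ ε < ‖T (f i : C(K₁, ℝ)) y‖ :=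
    fun i => (f i).2
  obtain ⟨α, hα, hnorm⟩ := hcot ε hε m (fun i => T (f i : C(K₁, ℝ)) y)
    (fun i => le_of_lt (hmem i).2)
  set g : C(K₁, ℝ) := ∑ i, α i • (f i : C(K₁, ℝ)) with hg
  have hTg : (T g) y = ∑ i, α i • T (f i : C(K₁, ℝ)) y := by
    simp [hg, map_sum]
  -- pointwise bound on g
  have hgx : ∀ x : K₁, ‖g x‖ ≤ (k : ℝ) := by
    intro x
    have hgx1 : g x = ∑ i ∈ Finset.univ.filter (fun i => x ∈ tsupport ⇑(f i : C(K₁, ℝ))),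
        α i * (f i : C(K₁, ℝ)) x := by
      rw [hg]
      rw [Finset.sum_filter_of_ne]
      · simp
      · intro i _ hne
        by_contra hx
        exact hne (by simp only [ContinuousMap.smul_apply, smul_eq_mul,
          image_eq_zero_of_notMem_tsupport hx, mul_zero])
    have hcard : (Finset.univ.filter
        (fun i => x ∈ tsupport ⇑(f i : C(K₁, ℝ)))).card ≤ k := by
      set s := Finset.univ.filter (fun i => x ∈ tsupport ⇑(f i : C(K₁, ℝ))) with hs
      have hinj : Function.Injective (fun i : ↥(s : Set (Fin m)) =>
          (⟨(f i.1 : C(K₁, ℝ)), (hmem i.1).1, by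
            have := i.2; simp [hs] at this; exact this⟩ :
            ↥{f ∈ P | x ∈ tsupport ⇑f})) := by
        intro a b hab
        simp only [Subtype.mk_eq_mk] at hab
        have : f a.1 = f b.1 := Subtype.ext hab
        exact Subtype.ext (f.injective this)
      have h1 := Cardinal.lift_mk_le_lift_mk_of_injective hinj
      have h2 : Cardinal.lift.{0} #↥{f ∈ P | x ∈ tsupport ⇑f} ≤ Cardinal.lift.{0} (k : Cardinal) :=
        Cardinal.lift_le.2 (horder x)
      have h3 := h1.trans h2
      simp only [Cardinal.mk_fintype, Cardinal.lift_natCast] at h3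
      have h4 : Fintype.card {i // i ∈ (s : Set (Fin m))} = s.card := by simp
      rw [h4] at h3
      exact_mod_cast h3
    calc ‖g x‖ ≤ ∑ i ∈ Finset.univ.filter (fun i => x ∈ tsupport ⇑(f i : C(K₁, ℝ))),
          ‖α i * (f i : C(K₁, ℝ)) x‖ := by rw [hgx1]; exact norm_sum_le _ _
      _ ≤ ∑ _i ∈ Finset.univ.filter (fun i => x ∈ tsupport ⇑(f i : C(K₁, ℝ))), 1 := by
          apply Finset.sum_le_sum
          intro i _
          rw [norm_mul]
          have h1 : ‖α i‖ = 1 := by rcases hα i with h | h <;> simp [h]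
          have h2 : ‖(f i : C(K₁, ℝ)) x‖ ≤ 1 := by
            have := hrange _ (hmem i).1 x
            rw [Real.norm_eq_abs, abs_le]
            constructor <;> linarith [this.1, this.2]
          calc ‖α i‖ * ‖(f i : C(K₁, ℝ)) x‖ ≤ 1 * 1 := by
                rw [h1]; exact mul_le_mul_of_nonneg_left h2 zero_le_one
            _ = 1 := one_mul 1
      _ ≤ (k : ℝ) := by
          rw [Finset.sum_const, nsmul_eq_mul, mul_one]
          exact_mod_cast hcard
  have hgnorm : ‖g‖ ≤ (k : ℝ) := (ContinuousMap.norm_le _ (Nat.cast_nonneg k)).2 hgx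
  have hchain : ε * C * (m : ℝ) ^ (1 / q) ≤ (k : ℝ) * ‖T‖ := by
    calc ε * C * (m : ℝ) ^ (1 / q) ≤ ‖∑ i, α i • T (f i : C(K₁, ℝ)) y‖ := hnorm
      _ = ‖(T g) y‖ := by rw [hTg]
      _ ≤ ‖T g‖ := ContinuousMap.norm_coe_le_norm _ _
      _ ≤ ‖T‖ * ‖g‖ := T.le_opNorm g
      _ ≤ ‖T‖ * (k : ℝ) := mul_le_mul_of_nonneg_left hgnorm (norm_nonneg T)
      _ = (k : ℝ) * ‖T‖ := mul_comm _ _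
  have hεC : 0 < ε * C := mul_pos hε hC
  have hq0 : 0 < q := by linarith
  have hroot : ((m : ℝ)) ^ (1 / q) ≤ (k : ℝ) * ‖T‖ / (ε * C) := by
    rw [le_div_iff₀ hεC]
    calc (m : ℝ) ^ (1 / q) * (ε * C) = ε * C * (m : ℝ) ^ (1 / q) := by ring
      _ ≤ (k : ℝ) * ‖T‖ := hchain
  have hmle : (m : ℝ) ≤ ((k : ℝ) * ‖T‖ / (ε * C)) ^ q := by
    have h1 : ((m : ℝ) ^ (1 / q)) ^ q ≤ ((k : ℝ) * ‖T‖ / (ε * C)) ^ q :=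
      Real.rpow_le_rpow (Real.rpow_nonneg (Nat.cast_nonneg m) _) hroot (le_of_lt hq0)
    rwa [← Real.rpow_mul (Nat.cast_nonneg m), one_div_mul_cancel (ne_of_gt hq0),
      Real.rpow_one] at h1
  have : m ≤ N := by
    have := hmle.trans (Nat.le_ceil _)
    exact_mod_cast this
  omega
end
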